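/- For m ≥ 3 and i ≥ 2, the number of dominating sets of size i in the lollipop graph L_{m,1} equals C(m,i−1) + C(m−1,i−1). -/

import Mathlib

/-!
Write `p` for the pendant vertex and `0` for its neighbour in the clique; `0` is adjacent to every
other vertex. A set of size `i ≥ 2` containing `p` also contains some clique vertex, which dominates
the rest of the clique, so all `C(m, i - 1)` such sets dominate. A set avoiding `p` dominates iff it
contains `0`, the only neighbour of `p`; there are `C(m - 1, i - 1)` of these.
-/

/-- A finite set of vertices dominates the graph. -/
def Dominates {V : Type*} (G : SimpleGraph V) (U : Finset V) : Prop :=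
  ∀ v : V, v ∈ U ∨ ∃ u ∈ U, G.Adj u v

/-- The number of dominating sets of size `i`. -/
noncomputable def domCount {V : Type*} [Fintype V] (G : SimpleGraph V) (i : ℕ) : ℕ :=
  Nat.card {U : Finset V // U.card = i ∧ Dominates G U}

/-- The asymmetric adjacency relation of the lollipop graph `L_{m,n}`: a complete graph on
`Fin m`, a path on `Fin n`, and an edge joining vertex `0` of the complete graph to
the endpoint `0` of the path. -/
def lollipopRel {m n : ℕ} : (Fin m ⊕ Fin n) → (Fin m ⊕ Fin n) → Prop
  | .inl a, .inl b => a ≠ b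
  | .inl a, .inr i => (a : ℕ) = 0 ∧ (i : ℕ) = 0
  | .inr i, .inr j => (i : ℕ) + 1 = (j : ℕ)
  | _, _ => False

/-- The `(m,n)`-lollipop graph. -/
def lollipop (m n : ℕ) : SimpleGraph (Fin m ⊕ Fin n) :=
  SimpleGraph.fromRel lollipopRel

open Finset

theorem Dominates.of_forall_adj {V : Type*} {G : SimpleGraph V} {U : Finset V} {u : V}
    (hu : u ∈ U) (hadj : ∀ v, v ≠ u → G.Adj u v) : Dominates G U := fun v =>
  (eq_or_ne v u).imp (fun h : v = u => h ▸ hu) fun h => ⟨u, hu, hadj v h⟩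

open Classical in
theorem domCount_eq_card_filter {V : Type*} [Fintype V] (G : SimpleGraph V) (i : ℕ) :
    domCount G i = #{U ∈ univ.powersetCard i | Dominates G U} := by
  rw [domCount, Nat.card_eq_fintype_card, Fintype.card_subtype]
  congr 1
  ext U
  simp

theorem Finset.univ_sum_fin_one (α : Type*) [Fintype α] [DecidableEq α] :
    (univ : Finset (α ⊕ Fin 1)) = insert (.inr 0) (univ.map .inl) := by
  ext (a | j) <;> simp [Fin.fin_one_eq_zero]

theorem Finset.disjoint_powersetCard_image_insert {α : Type*} [DecidableEq α] {s : Finset α}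
    {x : α} (hx : x ∉ s) (k l : ℕ) :
    Disjoint (s.powersetCard k) ((s.powersetCard l).image (insert x)) := by
  refine disjoint_left.2 fun t ht ht' => hx ?_
  obtain ⟨u, -, rfl⟩ := mem_image.1 ht'
  exact (mem_powersetCard.1 ht).1 (mem_insert_self x u)

theorem Finset.card_image_insert_powersetCard {α : Type*} [DecidableEq α] {s : Finset α}
    {x : α} (hx : x ∉ s) (k : ℕ) :
    #((s.powersetCard k).image (insert x)) = (#s).choose k := by
  rw [card_image_of_injOn, card_powersetCard]
  intro t ht u hu htu
  have hxt : x ∉ t := fun h => hx ((mem_powersetCard.1 ht).1 h)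
  have hxu : x ∉ u := fun h => hx ((mem_powersetCard.1 hu).1 h)
  simpa [erase_insert hxt, erase_insert hxu] using congrArg (erase · x) htu

namespace Lollipop

variable {m n : ℕ}

@[simp]
theorem adj_inl_inl {a b : Fin m} : (lollipop m n).Adj (.inl a) (.inl b) ↔ a ≠ b := by
  simp +contextual [lollipop, lollipopRel]

@[simp]
theorem adj_inl_inr {a : Fin m} {j : Fin n} :
    (lollipop m n).Adj (.inl a) (.inr j) ↔ (a : ℕ) = 0 ∧ (j : ℕ) = 0 := by
  simp [lollipop, lollipopRel]

theorem dominates_of_inr_mem_of_inl_mem {U : Finset (Fin m ⊕ Fin 1)} {a : Fin m}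
    (hp : .inr 0 ∈ U) (ha : .inl a ∈ U) : Dominates (lollipop m 1) U := by
  rintro (b | j)
  · exact (eq_or_ne a b).imp (fun h : a = b => h ▸ ha) fun h => ⟨_, ha, adj_inl_inl.2 h⟩
  · exact .inl (Fin.fin_one_eq_zero j ▸ hp)

open Classical in
theorem filter_dominates_image_insert_inr {k : ℕ} (hk : 1 ≤ k) :
    {U ∈ ((univ.map .inl : Finset (Fin m ⊕ Fin 1)).powersetCard k).image (insert (.inr 0)) |
      Dominates (lollipop m 1) U} =
      ((univ.map .inl : Finset (Fin m ⊕ Fin 1)).powersetCard k).image (insert (.inr 0)) := by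
  refine filter_true_of_mem ?_
  simp only [mem_image, mem_powersetCard]
  rintro _ ⟨S, ⟨hS, hSk⟩, rfl⟩
  obtain ⟨_, ha⟩ := card_pos.1 (hSk ▸ hk)
  obtain ⟨a, -, rfl⟩ := mem_map.1 (hS ha)
  exact dominates_of_inr_mem_of_inl_mem (mem_insert_self _ _) (mem_insert_of_mem ha)

variable [NeZero m] {U : Finset (Fin m ⊕ Fin 1)}

theorem dominates_of_inl_zero_mem (h : .inl 0 ∈ U) : Dominates (lollipop m 1) U := by
  refine .of_forall_adj h fun v hv => ?_
  rcases v with b | j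
  · exact adj_inl_inl.2 fun hb => hv (by rw [hb])
  · simp [Fin.fin_one_eq_zero j]

theorem inl_zero_mem_of_dominates (hU : Dominates (lollipop m 1) U) (hp : .inr 0 ∉ U) :
    .inl 0 ∈ U := by
  obtain hp' | ⟨u | k, hu, hadj⟩ := hU (.inr 0)
  · exact absurd hp' hp
  · rw [adj_inl_inr] at hadj
    rwa [show u = 0 from Fin.ext hadj.1] at hu
  · exact absurd (congrArg Sum.inr (Subsingleton.elim k 0)) ((lollipop m 1).ne_of_adj hadj)

open Classical in
theorem card_filter_dominates_powersetCard_map_inl {k : ℕ} (hk : 1 ≤ k) :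
    #{U ∈ (univ.map .inl : Finset (Fin m ⊕ Fin 1)).powersetCard k |
      Dominates (lollipop m 1) U} = (m - 1).choose (k - 1) := by
  have hsub : ∀ U ∈ (univ.map .inl : Finset (Fin m ⊕ Fin 1)).powersetCard k,
      Dominates (lollipop m 1) U ↔ {.inl 0} ⊆ U := by
    intro U hU
    have hp : .inr 0 ∉ U := fun h => by simpa using (mem_powersetCard.1 hU).1 h
    rw [singleton_subset_iff]
    exact ⟨(inl_zero_mem_of_dominates · hp), dominates_of_inl_zero_mem⟩
  rw [filter_congr hsub, card_filter_powersetCard_subset _ _ _ (by simp) (by simpa)]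
  simp

end Lollipop

theorem domCount_lollipop_one (m i : ℕ) (hm : 3 ≤ m) (hi : 2 ≤ i) :
    domCount (lollipop m 1) i = Nat.choose m (i - 1) + Nat.choose (m - 1) (i - 1) := by
  classical
  have : NeZero m := ⟨by omega⟩
  obtain ⟨j, rfl⟩ : ∃ j, i = j + 1 := ⟨i - 1, by omega⟩
  have hp : (.inr 0 : Fin m ⊕ Fin 1) ∉ univ.map .inl := by simp
  rw [domCount_eq_card_filter, univ_sum_fin_one, powersetCard_succ_insert hp, filter_union,
    card_union_of_disjoint (disjoint_filter_filter (disjoint_powersetCard_image_insert hp _ _)),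
    Lollipop.card_filter_dominates_powersetCard_map_inl (by omega),
    Lollipop.filter_dominates_image_insert_inr (by omega), card_image_insert_powersetCard hp,
    card_map, card_univ, Fintype.card_fin, add_comm, Nat.succ_sub_one]
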